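/- arXiv:1902.08057 — 2 statements merged into one kernel-verified Lean document; each statement's English description precedes it below -/
import Mathlib

section
/- Let w = (I - yy*)z be a solution of the normal equations (I - yy*)V*(A - θI)*(A - θI)V w = -(I - yy*)V*(A - θI)*(A - θI)Vy, where y is a unit vector. Then the inner product ⟨(A - θI)Vw, (A - θI)Vy⟩ equals -‖(A - θI)Vw‖². -/
/-!
Write `P = (A - θI)V`, so that `M = P*P` and `⟨Pu, Pv⟩ = ⟨u, Mv⟩`. Since `w` lies in the range
of `I - yy*` it is orthogonal to `y`, and pairing the normal equations with `w` removes the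
projections: `⟨w, Mw⟩ = -⟨w, My⟩`. The left side is `‖Pw‖²`, the right side `-⟨Pw, Py⟩`.
-/

open Matrix
open scoped ComplexConjugate

/-- Squared Euclidean norm of a complex vector. -/
noncomputable def nsq {k : ℕ} (x : Fin k → ℂ) : ℝ := ∑ i, ‖x i‖ ^ 2

/-- Standard Hermitian inner product (conjugate-linear in the first argument). -/
noncomputable def cip {k : ℕ} (x y : Fin k → ℂ) : ℂ := ∑ i, conj (x i) * y i

/-- Orthogonal projection `(I - yy*) v`. -/
noncomputable def proj {k : ℕ} (y v : Fin k → ℂ) : Fin k → ℂ := v - cip y v • y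

lemma cip_eq_star_dotProduct {k : ℕ} (x y : Fin k → ℂ) : cip x y = star x ⬝ᵥ y := rfl

lemma cip_self {k : ℕ} (x : Fin k → ℂ) : cip x x = nsq x := by
  simp only [cip, nsq, Complex.ofReal_sum, Complex.ofReal_pow, Complex.conj_mul']

lemma star_cip {k : ℕ} (x y : Fin k → ℂ) : star (cip x y) = cip y x := by
  rw [cip_eq_star_dotProduct, cip_eq_star_dotProduct, star_dotProduct, star_star]

lemma cip_neg_right {k : ℕ} (x v : Fin k → ℂ) : cip x (-v) = -cip x v := dotProduct_neg _ _

lemma cip_mulVec_mulVec {m k : ℕ} (P : Matrix (Fin m) (Fin k) ℂ) (u v : Fin k → ℂ) :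
    cip (P *ᵥ u) (P *ᵥ v) = cip u ((Pᴴ * P) *ᵥ v) := by
  simp only [cip_eq_star_dotProduct, star_mulVec, dotProduct_mulVec, vecMul_vecMul,
    ← mulVec_mulVec]

lemma cip_proj_left_self {k : ℕ} {y : Fin k → ℂ} (hy : nsq y = 1) (z : Fin k → ℂ) :
    cip (proj y z) y = 0 := by
  have hyy : cip y y = 1 := by rw [cip_self, hy, Complex.ofReal_one]
  rw [proj, cip_eq_star_dotProduct, star_sub, star_smul, sub_dotProduct, smul_dotProduct,
    ← cip_eq_star_dotProduct, ← cip_eq_star_dotProduct, hyy, star_cip, smul_eq_mul, mul_one,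
    sub_self]

lemma cip_proj_right_of_cip_eq_zero {k : ℕ} {w y : Fin k → ℂ} (h : cip w y = 0)
    (v : Fin k → ℂ) : cip w (proj y v) = cip w v := by
  rw [proj, cip_eq_star_dotProduct, dotProduct_sub, dotProduct_smul,
    ← cip_eq_star_dotProduct w y, h, smul_zero, sub_zero, cip_eq_star_dotProduct]

theorem stmt1_general {n k : ℕ} (A : Matrix (Fin n) (Fin n) ℂ) (V : Matrix (Fin n) (Fin k) ℂ)
    (θ : ℂ) (y z : Fin k → ℂ)
    (hy : nsq y = 1)
    (M : Matrix (Fin k) (Fin k) ℂ)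
    (hM : M = Vᴴ * (A - θ • 1)ᴴ * ((A - θ • 1) * V))
    (w : Fin k → ℂ) (hw : w = proj y z)
    (hne : proj y (M.mulVec w) = -(proj y (M.mulVec y))) :
    cip ((A - θ • 1).mulVec (V.mulVec w)) ((A - θ • 1).mulVec (V.mulVec y))
      = -((nsq ((A - θ • 1).mulVec (V.mulVec w)) : ℝ) : ℂ) := by
  set P := (A - θ • 1) * V
  have hMP : M = Pᴴ * P := by rw [hM, conjTranspose_mul, Matrix.mul_assoc]
  have hwy : cip w y = 0 := hw ▸ cip_proj_left_self hy z
  have hnormal : cip w (M *ᵥ w) = -cip w (M *ᵥ y) := by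
    have h := congrArg (cip w) hne
    rwa [cip_neg_right, cip_proj_right_of_cip_eq_zero hwy,
      cip_proj_right_of_cip_eq_zero hwy] at h
  simp only [mulVec_mulVec]
  rw [← cip_self, cip_mulVec_mulVec, cip_mulVec_mulVec, ← hMP, hnormal, neg_neg]

theorem stmt1 {n k : ℕ} (A : Matrix (Fin n) (Fin n) ℂ) (V : Matrix (Fin n) (Fin k) ℂ)
    (θ : ℂ) (y z : Fin k → ℂ)
    (hV : Vᴴ * V = 1) (hy : nsq y = 1)
    (M : Matrix (Fin k) (Fin k) ℂ)
    (hM : M = Vᴴ * (A - θ • 1)ᴴ * ((A - θ • 1) * V))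
    (w : Fin k → ℂ) (hw : w = proj y z)
    (hne : proj y (M.mulVec w) = -(proj y (M.mulVec y))) :
    cip ((A - θ • 1).mulVec (V.mulVec w)) ((A - θ • 1).mulVec (V.mulVec y))
      = -((nsq ((A - θ • 1).mulVec (V.mulVec w)) : ℝ) : ℂ) :=
  stmt1_general A V θ y z hy M hM w hw hne
end

section
/- Let B be a Hermitian matrix, u a unit vector with Rayleigh quotient α, and s = u + τ(I - uu*)t a minimizer of the Rayleigh quotient ρ over span{u, (I - uu*)t} with τ ≠ 0. Define J := (I - uu*)(B - ρ(s)I)(I - uu*). Then ρ(s) = α - |⟨(B - αI)u, (I - uu*)t⟩|² / ⟨J(I - uu*)t, (I - uu*)t⟩. -/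
/-! Write `M = B - ρ(s) I`. Minimality of `s` says that the Hermitian form `⟨M x, x⟩` is
nonnegative on `span {u, w}` and vanishes at `s`, so `s` is a critical point of this form on the
span: `⟨M u, s⟩ = ⟨M w, s⟩ = 0`. With `α = ⟨B u, u⟩`, `β = ⟨B u, w⟩` and `γ = ⟨M w, w⟩ = ⟨J w, w⟩`
these two equations read `α - ρ + τ β = 0` and `conj β + τ γ = 0`, whence `β = -conj τ γ` and
`α - ρ = |τ|² γ = |β|² / γ`. -/

open Matrix
open scoped ComplexConjugate

/-- Rayleigh quotient of a vector with respect to a (Hermitian) matrix. -/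
noncomputable def rq {k : ℕ} (B : Matrix (Fin k) (Fin k) ℂ) (x : Fin k → ℂ) : ℝ :=
  (cip (B.mulVec x) x).re / nsq x

open RCLike
open scoped InnerProductSpace
open WithLp (toLp)

theorem RCLike.eq_sub_norm_sq_div_of_add_mul_eq_zero {𝕜 : Type*} [RCLike 𝕜] {α ρ γ : ℝ}
    {β τ : 𝕜} (h₁ : (α : 𝕜) - ρ + τ * β = 0) (h₂ : conj β + τ * γ = 0) :
    ρ = α - ‖β‖ ^ 2 / γ := by
  have hβ : β = -(conj τ * γ) := by
    simpa [eq_neg_iff_add_eq_zero] using congrArg conj h₂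
  have hρ : ρ = α - ‖τ‖ ^ 2 * γ := by
    have : ((α - ρ : ℝ) : 𝕜) = ((‖τ‖ ^ 2 * γ : ℝ) : 𝕜) := by
      push_cast
      rw [← RCLike.mul_conj]
      linear_combination h₁ - τ * hβ
    linarith [RCLike.ofReal_injective this]
  rw [hρ, hβ, norm_neg, norm_mul, RCLike.norm_conj, RCLike.norm_ofReal, mul_pow, sq_abs, sq γ,
    mul_div_assoc, mul_self_div_self]

section InnerProductSpace

variable {𝕜 E : Type*} [RCLike 𝕜] [NormedAddCommGroup E] [InnerProductSpace 𝕜 E]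

theorem re_inner_sub_ofReal_smul_left (x y : E) (ρ : ℝ) :
    re ⟪y - (ρ : 𝕜) • x, x⟫_𝕜 = re ⟪y, x⟫_𝕜 - ρ * ‖x‖ ^ 2 := by
  rw [inner_sub_left, inner_smul_left, conj_ofReal, inner_self_eq_norm_sq_to_K, map_sub,
    ← ofReal_pow, ← ofReal_mul, ofReal_re]

namespace LinearMap.IsSymmetric

variable {T : E →ₗ[𝕜] E}

theorem sub_ofReal_smul_id (hT : T.IsSymmetric) (ρ : ℝ) :
    (T - (ρ : 𝕜) • LinearMap.id).IsSymmetric :=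
  hT.sub (LinearMap.IsSymmetric.id.smul (conj_ofReal ρ))

theorem re_inner_add_smul (hT : T.IsSymmetric) (s v : E) (e : 𝕜) :
    re ⟪T (s + e • v), s + e • v⟫_𝕜 =
      re ⟪T s, s⟫_𝕜 + 2 * re (conj e * ⟪T v, s⟫_𝕜) + ‖e‖ ^ 2 * re ⟪T v, v⟫_𝕜 := by
  have hsv : ⟪T s, v⟫_𝕜 = conj ⟪T v, s⟫_𝕜 := (hT.conj_inner_sym v s).symm
  have : ⟪T (s + e • v), s + e • v⟫_𝕜 = ⟪T s, s⟫_𝕜 + (conj e * ⟪T v, s⟫_𝕜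
      + conj (conj e * ⟪T v, s⟫_𝕜)) + (‖e‖ ^ 2 : 𝕜) * ⟪T v, v⟫_𝕜 := by
    simp only [map_add, map_smul, inner_add_left, inner_add_right, inner_smul_left,
      inner_smul_right, hsv, map_mul, conj_conj, ← RCLike.conj_mul]
    ring
  rw [this, map_add, map_add, map_add, conj_re, ← ofReal_pow, re_ofReal_mul]
  ring

theorem inner_eq_zero_of_forall_re_inner_add_smul_nonneg (hT : T.IsSymmetric) {s : E}
    (hs : re ⟪T s, s⟫_𝕜 = 0) (v : E) (h : ∀ e : 𝕜, 0 ≤ re ⟪T (s + e • v), s + e • v⟫_𝕜) :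
    ⟪T v, s⟫_𝕜 = 0 := by
  set c := ⟪T v, s⟫_𝕜
  -- along `e = x c` with `x` real the form is a real quadratic in `x` without constant term,
  -- so its discriminant `4 ‖c‖ ^ 4` is `≤ 0`
  have hquad (x : ℝ) : 0 ≤ ‖c‖ ^ 2 * re ⟪T v, v⟫_𝕜 * (x * x) + 2 * ‖c‖ ^ 2 * x + 0 := by
    have hlin : conj ((x : 𝕜) * c) * c = ((x * ‖c‖ ^ 2 : ℝ) : 𝕜) := by
      push_cast
      rw [← RCLike.conj_mul, map_mul, conj_ofReal, mul_assoc]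
    have := h (x * c)
    rw [hT.re_inner_add_smul, hs, hlin, ofReal_re, norm_mul, norm_ofReal, mul_pow,
      sq_abs] at this
    linarith
  have hdiscr := discrim_le_zero hquad
  rw [discrim] at hdiscr
  have : ‖c‖ ^ 2 = 0 := by nlinarith
  simpa using this

theorem eq_re_inner_sub_of_inner_sub_smul_eq_zero (hT : T.IsSymmetric) {u w : E} (hu : ‖u‖ = 1)
    (huw : ⟪u, w⟫_𝕜 = 0) {τ : 𝕜} {ρ : ℝ}
    (hu_crit : ⟪T u - (ρ : 𝕜) • u, u + τ • w⟫_𝕜 = 0)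
    (hw_crit : ⟪T w - (ρ : 𝕜) • w, u + τ • w⟫_𝕜 = 0) :
    ρ = re ⟪T u, u⟫_𝕜 - ‖⟪T u, w⟫_𝕜‖ ^ 2 / re ⟪T w - (ρ : 𝕜) • w, w⟫_𝕜 := by
  have huu : ⟪u, u⟫_𝕜 = 1 := by rw [inner_self_eq_norm_sq_to_K, hu]; simp
  have hwu : ⟪w, u⟫_𝕜 = 0 := inner_eq_zero_symm.mp huw
  have hα := hT.coe_re_inner_apply_self u
  have hγ := (hT.sub_ofReal_smul_id ρ).coe_re_inner_apply_self w
  simp only [LinearMap.sub_apply, LinearMap.smul_apply, LinearMap.id_apply] at hγ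
  refine RCLike.eq_sub_norm_sq_div_of_add_mul_eq_zero (τ := τ) ?_ ?_
  · rw [inner_add_right, inner_smul_right, inner_sub_left, inner_sub_left, inner_smul_left,
      inner_smul_left, huu, huw, conj_ofReal, ← hα] at hu_crit
    linear_combination hu_crit
  · rw [inner_add_right, inner_smul_right, inner_sub_left, inner_smul_left, hwu,
      ← hT.conj_inner_sym u w] at hw_crit
    linear_combination hw_crit + τ * hγ

end LinearMap.IsSymmetric

theorem ContinuousLinearMap.rayleighQuotient_eq_of_forall_le {T : E →L[𝕜] E}
    (hT : (T : E →ₗ[𝕜] E).IsSymmetric) {u w : E} (hu : ‖u‖ = 1) (huw : ⟪u, w⟫_𝕜 = 0) (τ : 𝕜)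
    (hmin : ∀ a b : 𝕜, a • u + b • w ≠ 0 →
      T.rayleighQuotient (u + τ • w) ≤ T.rayleighQuotient (a • u + b • w)) :
    T.rayleighQuotient (u + τ • w) = re ⟪T u, u⟫_𝕜 - ‖⟪T u, w⟫_𝕜‖ ^ 2 /
      re ⟪T w - (T.rayleighQuotient (u + τ • w) : 𝕜) • w, w⟫_𝕜 := by
  set s := u + τ • w
  set ρ := T.rayleighQuotient s
  set M := (T : E →ₗ[𝕜] E) - (ρ : 𝕜) • LinearMap.id
  have hM : M.IsSymmetric := hT.sub_ofReal_smul_id ρ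
  have hMx (x : E) : re ⟪M x, x⟫_𝕜 = re ⟪T x, x⟫_𝕜 - ρ * ‖x‖ ^ 2 :=
    re_inner_sub_ofReal_smul_left x (T x) ρ
  have hs0 : s ≠ 0 := by
    intro h
    have : ⟪u, s⟫_𝕜 = 1 := by
      rw [inner_add_right, inner_smul_right, huw, inner_self_eq_norm_sq_to_K, hu]; simp
    simp [h] at this
  have hMs : re ⟪M s, s⟫_𝕜 = 0 := by
    have hρ : ρ * ‖s‖ ^ 2 = re ⟪T s, s⟫_𝕜 := div_mul_cancel₀ _ (by positivity)
    rw [hMx, hρ, sub_self]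
  have hM_nonneg (a b : 𝕜) : 0 ≤ re ⟪M (a • u + b • w), a • u + b • w⟫_𝕜 := by
    by_cases hx : a • u + b • w = 0
    · simp [hx]
    have := hmin a b hx
    rw [le_div_iff₀ (by positivity), ContinuousLinearMap.reApplyInnerSelf_apply] at this
    linarith [hMx (a • u + b • w)]
  have hu_crit := hM.inner_eq_zero_of_forall_re_inner_add_smul_nonneg hMs u fun e => by
    rw [show s + e • u = (1 + e) • u + τ • w by module]
    exact hM_nonneg _ _
  have hw_crit := hM.inner_eq_zero_of_forall_re_inner_add_smul_nonneg hMs w fun e => by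
    rw [show s + e • w = (1 : 𝕜) • u + (τ + e) • w by module]
    exact hM_nonneg _ _
  exact hT.eq_re_inner_sub_of_inner_sub_smul_eq_zero hu huw hu_crit hw_crit

end InnerProductSpace

section EuclideanSpace

variable {k : ℕ}

theorem cip_eq_inner (x y : Fin k → ℂ) : cip x y = ⟪toLp 2 x, toLp 2 y⟫_ℂ := by
  simp [cip, EuclideanSpace.inner_toLp_toLp, dotProduct, mul_comm]

theorem nsq_eq_norm_sq (x : Fin k → ℂ) : nsq x = ‖toLp 2 x‖ ^ 2 := by
  simp [nsq, EuclideanSpace.norm_sq_eq]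

theorem rq_eq_rayleighQuotient (B : Matrix (Fin k) (Fin k) ℂ) (x : Fin k → ℂ) :
    rq B x = (toEuclideanCLM (n := Fin k) (𝕜 := ℂ) B).rayleighQuotient (toLp 2 x) := by
  rw [rq, cip_eq_inner, nsq_eq_norm_sq]; rfl

theorem toLp_proj (y v : Fin k → ℂ) :
    toLp 2 (proj y v) = toLp 2 v - ⟪toLp 2 y, toLp 2 v⟫_ℂ • toLp 2 y := by
  simp [proj, cip_eq_inner]

theorem one_sub_vecMulVec_mulVec (u y : Fin k → ℂ) :
    (1 - vecMulVec u (star u)) *ᵥ y = proj u y := by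
  rw [sub_mulVec, one_mulVec, vecMulVec_mulVec, op_smul_eq_smul, proj]
  rfl

theorem toLp_sub_smul_one_mulVec (A : Matrix (Fin k) (Fin k) ℂ) (c : ℂ) (x : Fin k → ℂ) :
    toLp 2 ((A - c • 1) *ᵥ x) =
      toEuclideanCLM (n := Fin k) (𝕜 := ℂ) A (toLp 2 x) - c • toLp 2 x := by
  rw [sub_mulVec, smul_mulVec, one_mulVec]
  rfl

theorem cip_compress_mulVec_of_cip_eq_zero {u w : Fin k → ℂ} (huw : cip u w = 0)
    (A : Matrix (Fin k) (Fin k) ℂ) :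
    cip (((1 - vecMulVec u (star u)) * A * (1 - vecMulVec u (star u))) *ᵥ w) w
      = cip (A *ᵥ w) w := by
  have hw : proj u w = w := by simp [proj, huw]
  rw [← mulVec_mulVec, ← mulVec_mulVec, one_sub_vecMulVec_mulVec, one_sub_vecMulVec_mulVec, hw,
    cip_eq_inner, toLp_proj, inner_sub_left, inner_smul_left]
  simp only [← cip_eq_inner, huw, mul_zero, sub_zero]

end EuclideanSpace

theorem stmt3_general {k : ℕ} (B : Matrix (Fin k) (Fin k) ℂ) (hB : Bᴴ = B)
    (u t : Fin k → ℂ) (hu : nsq u = 1)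
    (w : Fin k → ℂ) (hw : w = proj u t)
    (τ : ℂ)
    (s : Fin k → ℂ) (hs : s = u + τ • w)
    (hmin : ∀ a b : ℂ, a • u + b • w ≠ 0 → rq B s ≤ rq B (a • u + b • w))
    (J : Matrix (Fin k) (Fin k) ℂ)
    (hJ : J = (1 - vecMulVec u (star u)) * (B - ((rq B s : ℝ) : ℂ) • 1) *
      (1 - vecMulVec u (star u))) :
    rq B s = (cip (B.mulVec u) u).re -
      ‖cip ((B - cip (B.mulVec u) u • 1).mulVec u) w‖ ^ 2 / (cip (J.mulVec w) w).re := by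
  have hU : ‖toLp 2 u‖ = 1 := by
    rw [← pow_eq_one_iff_of_nonneg (norm_nonneg _) two_ne_zero, ← nsq_eq_norm_sq, hu]
  have huw : cip u w = 0 := by
    rw [hw, cip_eq_inner, toLp_proj, inner_sub_right, inner_smul_right,
      inner_self_eq_norm_sq_to_K, hU]
    simp
  have key := (toEuclideanCLM (n := Fin k) (𝕜 := ℂ) B).rayleighQuotient_eq_of_forall_le
    (isSymmetric_toEuclideanLin_iff.mpr hB) hU (by rwa [← cip_eq_inner]) τ fun a b hab => by
      have := hmin a b fun h => hab (congrArg (toLp 2) h)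
      rwa [hs, rq_eq_rayleighQuotient, rq_eq_rayleighQuotient] at this
  rw [hJ, cip_compress_mulVec_of_cip_eq_zero huw, cip_eq_inner, cip_eq_inner, cip_eq_inner,
    toLp_sub_smul_one_mulVec, toLp_sub_smul_one_mulVec, inner_sub_left, inner_smul_left,
    ← cip_eq_inner u w, huw, mul_zero, sub_zero, hs, rq_eq_rayleighQuotient]
  exact key

theorem stmt3 {k : ℕ} (B : Matrix (Fin k) (Fin k) ℂ) (hB : Bᴴ = B)
    (u t : Fin k → ℂ) (hu : nsq u = 1)
    (w : Fin k → ℂ) (hw : w = proj u t)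
    (τ : ℂ) (hτ : τ ≠ 0)
    (s : Fin k → ℂ) (hs : s = u + τ • w)
    (hmin : ∀ a b : ℂ, a • u + b • w ≠ 0 → rq B s ≤ rq B (a • u + b • w))
    (J : Matrix (Fin k) (Fin k) ℂ)
    (hJ : J = (1 - vecMulVec u (star u)) * (B - ((rq B s : ℝ) : ℂ) • 1) *
      (1 - vecMulVec u (star u)))
    (hJw : cip (J.mulVec w) w ≠ 0) :
    rq B s = (cip (B.mulVec u) u).re -
      ‖cip ((B - cip (B.mulVec u) u • 1).mulVec u) w‖ ^ 2 / (cip (J.mulVec w) w).re :=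
  stmt3_general B hB u t hu w hw τ s hs hmin J hJ
end
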